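/- Let G be a connected graph with at least two 3-cores. Then for any vertex x of G there exists a 3-core X ⊆ V(G) \ {x} such that G − X is connected. -/

import Mathlib

/- A finite multigraph is given by a vertex type `V`, an edge type `E`, and an endpoint
map `ends : E → V × V` (each edge is given with a reference orientation; the graph is
undirected, so each edge may be traversed both ways). An arc is a pair `(e, d)`:
`(e, true)` traverses `e` from `(ends e).1` to `(ends e).2`, and `(e, false)` the other
way. -/

variable {V E : Type}

/-- The tail of an arc. -/
def arcTail (ends : E → V × V) (p : E × Bool) : V :=
  if p.2 then (ends p.1).1 else (ends p.1).2

/-- The head of an arc. -/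
def arcHead (ends : E → V × V) (p : E × Bool) : V :=
  if p.2 then (ends p.1).2 else (ends p.1).1

/-- A trail: a sequence of arcs with pairwise distinct underlying edges, the head of each
arc being the tail of the next. -/
def IsTrail (ends : E → V × V) (T : List (E × Bool)) : Prop :=
  (T.map Prod.fst).Nodup ∧ T.Chain' (fun p q => arcHead ends p = arcTail ends q)

/-- A (nonempty) trail from `u` to `v`. -/
def IsTrailFromTo (ends : E → V × V) (T : List (E × Bool)) (u v : V) : Prop :=
  IsTrail ends T ∧ T.head?.map (arcTail ends) = some u ∧
    T.getLast?.map (arcHead ends) = some v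

/-- An Eulerian trail from `u` to `v`: a trail from `u` to `v` using every edge
(exactly once, by the trail property). -/
def IsEulerianTrail (ends : E → V × V) (T : List (E × Bool)) (u v : V) : Prop :=
  IsTrailFromTo ends T u v ∧ ∀ e : E, e ∈ T.map Prod.fst

/-- A circuit: a closed trail. -/
def IsCircuit (ends : E → V × V) (T : List (E × Bool)) : Prop :=
  ∃ v, IsTrailFromTo ends T v v

/-- Adjacency via some edge. -/
def Adj (ends : E → V × V) (u v : V) : Prop :=
  ∃ e, ends e = (u, v) ∨ ends e = (v, u)

/-- Reachability in the multigraph. -/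
def Reach (ends : E → V × V) : V → V → Prop :=
  Relation.ReflTransGen (Adj ends)

/-- Reachability using only edges from `S`. -/
def ReachVia (ends : E → V × V) (S : Set E) : V → V → Prop :=
  Relation.ReflTransGen (fun u v => ∃ e ∈ S, ends e = (u, v) ∨ ends e = (v, u))

/-- The degree of a vertex (loops counted twice). -/
noncomputable def degree (ends : E → V × V) (v : V) : ℕ :=
  {e | (ends e).1 = v}.ncard + {e | (ends e).2 = v}.ncard

/-- The set of edges with exactly one end in `X`. -/
def edgeCut (ends : E → V × V) (X : Set V) : Set E :=
  {e | ¬ ((ends e).1 ∈ X ↔ (ends e).2 ∈ X)}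

/-- The vertices of `X` are pairwise 3-edge-connected: any two of them remain connected
after removing any set of at most 2 edges. -/
def PairwiseThreeEdgeConnected (ends : E → V × V) (X : Set V) : Prop :=
  ∀ u ∈ X, ∀ v ∈ X, ∀ F : Set E, F.ncard ≤ 2 → ReachVia ends Fᶜ u v

/-- A 3-core: a maximal set of vertices whose pairwise edge-connectivity is at least 3. -/
def IsCore (ends : E → V × V) (X : Set V) : Prop :=
  PairwiseThreeEdgeConnected ends X ∧
    ∀ Y : Set V, PairwiseThreeEdgeConnected ends Y → X ⊆ Y → Y = X

/-- Reachability in `G − X`, i.e. using only edges with both ends outside `X`. -/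
def ReachOutside (ends : E → V × V) (X : Set V) : V → V → Prop :=
  Relation.ReflTransGen
    (fun u v => u ∉ X ∧ v ∉ X ∧ ∃ e, ends e = (u, v) ∨ ends e = (v, u))


section Aux

variable {V E : Type}

/-- The pairwise 3-edge-connectivity relation. -/
private def EC3 (ends : E → V × V) (u v : V) : Prop :=
  ∀ F : Set E, F.ncard ≤ 2 → ReachVia ends Fᶜ u v

private lemma reachVia_symm {ends : E → V × V} {S : Set E} {u v : V}
    (h : ReachVia ends S u v) : ReachVia ends S v u :=
  @Std.Symm.symm _ _ (@Relation.ReflTransGen.stdSymm _ _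
    ⟨fun _ _ ⟨e, he, h⟩ => ⟨e, he, h.symm⟩⟩) _ _ h

private lemma ec3_refl (ends : E → V × V) (u : V) : EC3 ends u u :=
  fun _ _ => Relation.ReflTransGen.refl

private lemma ec3_symm {ends : E → V × V} {u v : V} (h : EC3 ends u v) :
    EC3 ends v u := fun F hF => reachVia_symm (h F hF)

private lemma ec3_trans {ends : E → V × V} {u v w : V} (h1 : EC3 ends u v)
    (h2 : EC3 ends v w) : EC3 ends u w :=
  fun F hF => (h1 F hF).trans (h2 F hF)

/-- The 3-core (equivalence class) of a vertex. -/
private def cls3 (ends : E → V × V) (u : V) : Set V := {v | EC3 ends u v}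

private lemma ptec_cls3 (ends : E → V × V) (u : V) :
    PairwiseThreeEdgeConnected ends (cls3 ends u) :=
  fun _ ha _ hb F hF => (ec3_trans (ec3_symm ha) hb) F hF

private lemma isCore_cls3 (ends : E → V × V) (u : V) : IsCore ends (cls3 ends u) := by
  refine ⟨ptec_cls3 ends u, fun Y hY hsub => ?_⟩
  have hu : u ∈ Y := hsub (ec3_refl ends u)
  exact Set.Subset.antisymm (fun v hv => (fun F hF => hY u hu v hv F hF : EC3 ends u v)) hsub

private lemma core_eq_cls3 {ends : E → V × V} {X : Set V} (hX : IsCore ends X)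
    {u : V} (hu : u ∈ X) : X = cls3 ends u := by
  have hsub : X ⊆ cls3 ends u := fun v hv => (fun F hF => hX.1 u hu v hv F hF : EC3 ends u v)
  exact (hX.2 (cls3 ends u) (ptec_cls3 ends u) hsub).symm

private lemma reachOutside_notin {ends : E → V × V} {X : Set V} {a b : V}
    (h : ReachOutside ends X a b) (ha : a ∉ X) : b ∉ X := by
  induction h with
  | refl => exact ha
  | tail _ hstep _ => exact hstep.2.1

private lemma reachOutside_symm {ends : E → V × V} {X : Set V} {a b : V}
    (h : ReachOutside ends X a b) : ReachOutside ends X b a :=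
  @Std.Symm.symm _ _ (@Relation.ReflTransGen.stdSymm _ _
    ⟨fun _ _ ⟨h1, h2, e, he⟩ => ⟨h2, h1, e, he.symm⟩⟩) _ _ h

/-- A walk either avoids `X` entirely or hits a vertex of `X`. -/
private lemma reachVia_hits {ends : E → V × V} {S : Set E} (X : Set V) {a b : V}
    (h : ReachVia ends S a b) :
    ReachOutside ends X a b ∨ ∃ z ∈ X, ReachVia ends S a z := by
  induction h using Relation.ReflTransGen.head_induction_on with
  | refl => exact Or.inl Relation.ReflTransGen.refl
  | head hstep _ ih =>
    rename_i a c _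
    by_cases ha : a ∈ X
    · exact Or.inr ⟨a, ha, Relation.ReflTransGen.refl⟩
    · by_cases hc : c ∈ X
      · exact Or.inr ⟨c, hc, Relation.ReflTransGen.single hstep⟩
      · rcases ih with hro | ⟨z, hz, hvia⟩
        · obtain ⟨e, _, he⟩ := hstep
          exact Or.inl (Relation.ReflTransGen.head ⟨ha, hc, e, he⟩ hro)
        · exact Or.inr ⟨z, hz, Relation.ReflTransGen.head hstep hvia⟩

/-- If a core `X` separates `u` from some vertex 3-edge-connected to `u`,
then `u` belongs to `X`. -/
private lemma join_core {ends : E → V × V} {X : Set V} (hX : IsCore ends X) {u v : V}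
    (huv : EC3 ends u v) (hsep : ¬ ReachOutside ends X u v) : u ∈ X := by
  have key : ∀ w ∈ X, EC3 ends u w := by
    intro w hw F hF
    rcases reachVia_hits X (huv F hF) with h | ⟨z, hz, hvia⟩
    · exact absurd h hsep
    · exact hvia.trans (hX.1 z hz w hw F hF)
  have key' : ∀ b ∈ insert u X, ∀ F : Set E, F.ncard ≤ 2 → ReachVia ends Fᶜ u b := by
    intro b hb F hF
    rcases Set.mem_insert_iff.mp hb with rfl | hb
    · exact Relation.ReflTransGen.refl
    · exact key b hb F hF
  have hins : PairwiseThreeEdgeConnected ends (insert u X) := by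
    intro a ha b hb F hF
    rcases Set.mem_insert_iff.mp ha with hae | haX
    · subst hae; exact key' b hb F hF
    · rcases Set.mem_insert_iff.mp hb with hbe | hbX
      · subst hbe; exact reachVia_symm (key' a ha F hF)
      · exact hX.1 a haX b hbX F hF
  have := hX.2 _ hins (Set.subset_insert u X)
  exact this ▸ Set.mem_insert u X

private lemma find_boundary {ends : E → V × V} {X : Set V} {x w : V}
    (hx : x ∉ X) (hw : Reach ends x w) :
    ReachOutside ends X x w ∨
      ∃ a b, ReachOutside ends X x a ∧ b ∈ X ∧
        (∃ e, ends e = (a, b) ∨ ends e = (b, a)) := by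
  induction hw with
  | refl => exact Or.inl Relation.ReflTransGen.refl
  | tail _ hadj ih =>
    rename_i b c _
    rcases ih with hb | found
    · by_cases hc : c ∈ X
      · exact Or.inr ⟨b, c, hb, hc, hadj⟩
      · exact Or.inl (hb.tail ⟨reachOutside_notin hb hx, hc, hadj⟩)
    · exact Or.inr found

end Aux

/-- If a finite connected multigraph `G` has at least two 3-cores, then for any vertex
`x` there is a 3-core `X ⊆ V(G) \ {x}` such that `G − X` is connected. -/
theorem stmt16 {V E : Type} [Fintype V] [Fintype E] (ends : E → V × V)
    (hconn : ∀ u v : V, Reach ends u v)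
    (htwo : ∃ X Y : Set V, IsCore ends X ∧ IsCore ends Y ∧ X ≠ Y) :
    ∀ x : V, ∃ X : Set V, IsCore ends X ∧ x ∉ X ∧
      ∀ u v : V, u ∉ X → v ∉ X → ReachOutside ends X u v := by
  intro x
  classical
  obtain ⟨X0, Y0, hX0, hY0, hne⟩ := htwo
  have hCne : {Z : Set V | IsCore ends Z ∧ x ∉ Z}.Nonempty := by
    by_cases hx : x ∈ X0
    · refine ⟨Y0, hY0, fun hxY => ?_⟩
      exact hne ((core_eq_cls3 hX0 hx).trans (core_eq_cls3 hY0 hxY).symm)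
    · exact ⟨X0, hX0, hx⟩
  obtain ⟨X, hXC, hmax⟩ := Set.Finite.exists_maximalFor
    (fun Z => {w | ReachOutside ends Z x w}.ncard)
    {Z : Set V | IsCore ends Z ∧ x ∉ Z} (Set.toFinite _) hCne
  obtain ⟨hXcore, hxX⟩ := hXC
  refine ⟨X, hXcore, hxX, ?_⟩
  suffices hall : ∀ u, u ∉ X → ReachOutside ends X x u by
    intro u v hu hv
    exact (reachOutside_symm (hall u hu)).trans (hall v hv)
  by_contra hbad
  push_neg at hbad
  obtain ⟨u, huX, huS⟩ := hbad
  set Y := cls3 ends u with hYdef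
  have hYcore : IsCore ends Y := isCore_cls3 ends u
  -- every vertex reachable from x in G − X is not in Y
  have hYS : ∀ v, ReachOutside ends X x v → v ∉ Y := by
    intro v hvS hvY
    have hsep : ¬ ReachOutside ends X u v := fun h =>
      huS (hvS.trans (reachOutside_symm h))
    exact huX (join_core hXcore (hvY : EC3 ends u v) hsep)
  have hxS : ReachOutside ends X x x := Relation.ReflTransGen.refl
  have hxY : x ∉ Y := hYS x hxS
  -- X and Y are disjoint
  have hXY : ∀ w ∈ X, w ∉ Y := by
    intro w hw hwY
    have hXw : X = cls3 ends w := core_eq_cls3 hXcore hw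
    exact huX (hXw ▸ ((ec3_symm (hwY : EC3 ends u w)) : EC3 ends w u))
  -- everything reachable avoiding X is reachable avoiding Y
  have hSsub : ∀ w, ReachOutside ends X x w → ReachOutside ends Y x w := by
    intro w hw
    induction hw with
    | refl => exact Relation.ReflTransGen.refl
    | tail hxb hstep ih =>
      exact ih.tail ⟨hYS _ hxb, hYS _ (hxb.tail hstep), hstep.2.2⟩
  -- find an edge from the reachable part into X
  have hbound : ∃ a b, ReachOutside ends X x a ∧ b ∈ X ∧
      (∃ e, ends e = (a, b) ∨ ends e = (b, a)) := by
    rcases find_boundary hxX (hconn x u) with h | h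
    · exact absurd h huS
    · exact h
  obtain ⟨a, w', haS, hw'X, e, he⟩ := hbound
  have hw'Y : ReachOutside ends Y x w' :=
    (hSsub a haS).tail ⟨hYS a haS, hXY w' hw'X, ⟨e, he⟩⟩
  have hw'S : ¬ ReachOutside ends X x w' := fun h => (reachOutside_notin h hxX) hw'X
  have hssub : {w | ReachOutside ends X x w} ⊂ {w | ReachOutside ends Y x w} :=
    ⟨fun w hw => hSsub w hw, fun h => hw'S (h hw'Y)⟩
  have hlt : {w | ReachOutside ends X x w}.ncard < {w | ReachOutside ends Y x w}.ncard :=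
    Set.ncard_lt_ncard hssub (Set.toFinite _)
  exact absurd (hmax ⟨hYcore, hxY⟩ hlt.le) (not_le.mpr hlt)
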